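/- Let G be a group acting on a set S and on a set A, and acting on a real normed vector space Z by continuous linear equivalences ρ_Z : G → (Z ≃L Z) (not necessarily norm-preserving). Let F : S × A → Z and h : S → Z, let (s, a, s') ∈ S × A × S, and let ε₁, ε₂, ε₃ ≥ 0. Assume ‖F(s,a) − h(s')‖ ≤ ε₁, and for every g ∈ G: ‖F(g•s, g•a) − ρ_Z(g)(F(s,a))‖ ≤ ε₂ and ‖h(g•s') − ρ_Z(g)(h(s'))‖ ≤ ε₃. Then for every g ∈ G, ‖F(g•s, g•a) − h(g•s')‖ ≤ ε₁·‖ρ_Z(g)‖ + ε₂ + ε₃, where ‖ρ_Z(g)‖ denotes the operator norm of the continuous linear map ρ_Z(g). -/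

import Mathlib

theorem ContinuousLinearMap.norm_sub_le_norm_sub_apply_add_opNorm_mul
    {𝕜 E F : Type*} [NontriviallyNormedField 𝕜] [SeminormedAddCommGroup E] [SeminormedAddCommGroup F]
    [NormedSpace 𝕜 E] [NormedSpace 𝕜 F]
    (L : E →L[𝕜] F) (x y : E) (u v : F) :
    ‖u - v‖ ≤ ‖u - L x‖ + ‖L‖ * ‖x - y‖ + ‖v - L y‖ :=
  calc ‖u - v‖ ≤ ‖u - L x‖ + ‖L x - L y‖ + ‖L y - v‖ := by
        simpa only [dist_eq_norm] using dist_triangle4 u (L x) (L y) v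
    _ ≤ ‖u - L x‖ + ‖L‖ * ‖x - y‖ + ‖v - L y‖ := by
      rw [← map_sub, norm_sub_rev (L y)]
      gcongr
      exact L.le_opNorm _

theorem pointwise_generalization_bound_operator_norm_general
    {G S A Z : Type*} [Group G] [MulAction G S] [MulAction G A]
    [NormedAddCommGroup Z] [NormedSpace ℝ Z]
    (ρZ : G → (Z ≃L[ℝ] Z))
    (F : S × A → Z) (h : S → Z)
    (s : S) (a : A) (s' : S)
    (ε₁ ε₂ ε₃ : ℝ)
    (hmodel : ‖F (s, a) - h s'‖ ≤ ε₁)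
    (heqF : ∀ g : G, ‖F (g • s, g • a) - ρZ g (F (s, a))‖ ≤ ε₂)
    (heqh : ∀ g : G, ‖h (g • s') - ρZ g (h s')‖ ≤ ε₃) :
    ∀ g : G, ‖F (g • s, g • a) - h (g • s')‖ ≤
      ε₁ * ‖(ρZ g : Z →L[ℝ] Z)‖ + ε₂ + ε₃ := by
  intro g
  calc ‖F (g • s, g • a) - h (g • s')‖
      ≤ ‖F (g • s, g • a) - ρZ g (F (s, a))‖ + ‖(ρZ g : Z →L[ℝ] Z)‖ * ‖F (s, a) - h s'‖
          + ‖h (g • s') - ρZ g (h s')‖ :=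
        (ρZ g : Z →L[ℝ] Z).norm_sub_le_norm_sub_apply_add_opNorm_mul _ _ _ _
    _ ≤ ε₂ + ‖(ρZ g : Z →L[ℝ] Z)‖ * ε₁ + ε₃ := by
        gcongr
        exacts [heqF g, heqh g]
    _ = ε₁ * ‖(ρZ g : Z →L[ℝ] Z)‖ + ε₂ + ε₃ := by ring

/-- Variant of Proposition 1 for a non-`G`-invariant norm: the bound picks up
the operator norm of `ρZ g`. -/
theorem pointwise_generalization_bound_operator_norm
    {G S A Z : Type*} [Group G] [MulAction G S] [MulAction G A]
    [NormedAddCommGroup Z] [NormedSpace ℝ Z]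
    (ρZ : G → (Z ≃L[ℝ] Z))
    (F : S × A → Z) (h : S → Z)
    (s : S) (a : A) (s' : S)
    (ε₁ ε₂ ε₃ : ℝ) (hε₁ : 0 ≤ ε₁) (hε₂ : 0 ≤ ε₂) (hε₃ : 0 ≤ ε₃)
    (hmodel : ‖F (s, a) - h s'‖ ≤ ε₁)
    (heqF : ∀ g : G, ‖F (g • s, g • a) - ρZ g (F (s, a))‖ ≤ ε₂)
    (heqh : ∀ g : G, ‖h (g • s') - ρZ g (h s')‖ ≤ ε₃) :
    ∀ g : G, ‖F (g • s, g • a) - h (g • s')‖ ≤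
      ε₁ * ‖(ρZ g : Z →L[ℝ] Z)‖ + ε₂ + ε₃ :=
  pointwise_generalization_bound_operator_norm_general ρZ F h s a s' ε₁ ε₂ ε₃ hmodel heqF heqh
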